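/- arXiv:1601.02662 — 4 statements merged into one kernel-verified Lean document; each statement's English description precedes it below -/
import Mathlib

section
/- Let G be a finite connected simple graph admitting a disjunctive set-indexer f with respect to X such that the family f(V(G)) of vertex labels is a topology on X. Then G is a tree. -/
/-- The induced edge-labeling of a disjunctive set-labeling: the label of an
edge is the union of the labels of its endpoints. -/
def unionLabel {V X : Type*} [DecidableEq X] (f : V → Finset X) : Sym2 V → Finset X :=
  Sym2.lift ⟨fun u v => f u ∪ f v, fun u v => Finset.union_comm (f u) (f v)⟩

/-- A disjunctive set-indexer of a graph `G`: an injective vertex labeling by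
subsets of a ground set whose induced edge labeling (by unions) is injective
on the edge set. -/
def IsDSI {V X : Type*} [DecidableEq X] (G : SimpleGraph V) (f : V → Finset X) : Prop :=
  Function.Injective f ∧ Set.InjOn (unionLabel f) G.edgeSet
/-- A family `T` of subsets of a finite set `X` is a topology on `X` if it
contains `∅` and `X` and is closed under pairwise unions and intersections. -/
def IsTopologyOn (X : Type*) [Fintype X] [DecidableEq X] (T : Set (Finset X)) : Prop :=
  ∅ ∈ T ∧ (Finset.univ : Finset X) ∈ T ∧
    (∀ A ∈ T, ∀ B ∈ T, A ∪ B ∈ T) ∧ (∀ A ∈ T, ∀ B ∈ T, A ∩ B ∈ T)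

/-!
The edge labels `f u ∪ f v` are pairwise distinct, nonempty (the endpoints have distinct labels,
so not both are `∅`), and lie in the union-closed family `f(V)`. Hence there are at most
`|f(V) \ {∅}| = |V| - 1` edges, and a connected graph with at most `|V| - 1` edges is a tree.
-/

@[simp]
lemma unionLabel_mk {V X : Type*} [DecidableEq X] (f : V → Finset X) (u v : V) :
    unionLabel f s(u, v) = f u ∪ f v :=
  rfl

namespace IsDSI

variable {V X : Type*} [DecidableEq X] {G : SimpleGraph V} {f : V → Finset X}

lemma unionLabel_ne_empty (hf : IsDSI G f) {e : Sym2 V} (he : e ∈ G.edgeSet) :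
    unionLabel f e ≠ ∅ := by
  induction e with
  | _ u v =>
    rw [unionLabel_mk, Ne, Finset.union_eq_empty]
    rintro ⟨hu, hv⟩
    exact G.ne_of_adj he (hf.1 (hu.trans hv.symm))

lemma card_edgeSet_add_one_le [Finite V] (hf : IsDSI G f) (hempty : ∅ ∈ Set.range f)
    (hunion : ∀ A ∈ Set.range f, ∀ B ∈ Set.range f, A ∪ B ∈ Set.range f) :
    Nat.card G.edgeSet + 1 ≤ Nat.card V := by
  have hmaps : Set.MapsTo (unionLabel f) G.edgeSet (Set.range f \ {∅}) := by
    intro e he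
    induction e with
    | _ u v => exact ⟨hunion _ ⟨u, rfl⟩ _ ⟨v, rfl⟩, hf.unionLabel_ne_empty he⟩
  have hle : G.edgeSet.ncard ≤ (Set.range f \ {∅}).ncard :=
    Set.ncard_le_ncard_of_injOn _ hmaps hf.2 (Set.toFinite _)
  have hrange : (Set.range f).ncard = Nat.card V := by
    rw [← Set.image_univ, Set.ncard_image_of_injective _ hf.1, Set.ncard_univ]
  have hV : 0 < Nat.card V := Nat.card_pos_iff.2 ⟨hempty.nonempty, inferInstance⟩
  rw [Set.ncard_sdiff_singleton_of_mem hempty, hrange] at hle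
  rw [Nat.card_coe_set_eq]
  omega

end IsDSI

/-- If a connected graph admits a disjunctive set-indexer whose vertex labels
form a topology on the ground set, then the graph is a tree. -/
theorem DSI_topology_isTree {V X : Type*} [Fintype V] [Fintype X] [DecidableEq X]
    (G : SimpleGraph V) (hG : G.Connected) (f : V → Finset X)
    (hf : IsDSI G f) (htop : IsTopologyOn X (Set.range f)) :
    G.IsTree :=
  SimpleGraph.isTree_iff_connected_and_card.2
    ⟨hG, le_antisymm (hf.card_edgeSet_add_one_le htop.1 htop.2.2.1)
      hG.card_vert_le_card_edgeSet_add_one⟩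
end

section
/- Let G be a finite connected simple graph admitting a conjunctive set-indexer f with respect to X such that the family f(V(G)) of vertex labels is a topology on X. Then G is a tree. -/
/-- The induced edge-labeling of a conjunctive set-labeling: the label of an
edge is the intersection of the labels of its endpoints. -/
def interLabel {V X : Type*} [DecidableEq X] (f : V → Finset X) : Sym2 V → Finset X :=
  Sym2.lift ⟨fun u v => f u ∩ f v, fun u v => Finset.inter_comm (f u) (f v)⟩

/-- A conjunctive set-indexer of a graph `G`: an injective vertex labeling by
subsets of a ground set whose induced edge labeling (by intersections) is
injective on the edge set. -/
def IsCSI {V X : Type*} [DecidableEq X] (G : SimpleGraph V) (f : V → Finset X) : Prop :=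
  Function.Injective f ∧ Set.InjOn (interLabel f) G.edgeSet
/-!
The intersection labels of the edges are pairwise distinct members of the topology `f(V)`,
and none of them is `X`: `f u ∩ f v = X` would force `f u = f v = X`. Hence `G` has fewer
edges than vertices, and a connected graph with `|E| < |V|` is a tree.
-/

lemma SimpleGraph.Connected.isTree_of_card_edgeSet_lt {V : Type*} [Finite V] {G : SimpleGraph V}
    (hG : G.Connected) (h : Nat.card G.edgeSet < Nat.card V) : G.IsTree :=
  isTree_iff_connected_and_card.2 ⟨hG, le_antisymm h hG.card_vert_le_card_edgeSet_add_one⟩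

section interLabel

variable {V X : Type*} [DecidableEq X] {f : V → Finset X}

lemma interLabel_mem_range (hinter : ∀ A ∈ Set.range f, ∀ B ∈ Set.range f, A ∩ B ∈ Set.range f)
    (e : Sym2 V) : interLabel f e ∈ Set.range f := by
  induction e using Sym2.ind with
  | h u v => exact hinter _ ⟨u, rfl⟩ _ ⟨v, rfl⟩

lemma interLabel_ne_univ [Fintype X] {G : SimpleGraph V} (hf : Function.Injective f)
    {e : Sym2 V} (he : e ∈ G.edgeSet) : interLabel f e ≠ Finset.univ := by
  induction e using Sym2.ind with
  | h u v =>
    intro huniv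
    obtain ⟨hu, hv⟩ := Finset.inter_eq_univ.1 huniv
    exact G.ne_of_adj he (hf (hu.trans hv.symm))

lemma IsCSI.card_edgeSet_lt [Fintype X] {G : SimpleGraph V} (hf : IsCSI G f)
    (hinter : ∀ A ∈ Set.range f, ∀ B ∈ Set.range f, A ∩ B ∈ Set.range f)
    (huniv : Finset.univ ∈ Set.range f) : Nat.card G.edgeSet < Nat.card V := by
  rw [Nat.card_coe_set_eq, ← Set.ncard_range_of_injective hf.1]
  calc G.edgeSet.ncard
      ≤ (Set.range f \ {Finset.univ}).ncard :=
        Set.ncard_le_ncard_of_injOn _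
          (fun e he => ⟨interLabel_mem_range hinter e, interLabel_ne_univ hf.1 he⟩) hf.2
    _ < (Set.range f).ncard := Set.ncard_sdiff_singleton_lt_of_mem huniv

end interLabel

/-- If a connected graph admits a conjunctive set-indexer whose vertex labels
form a topology on the ground set, then the graph is a tree. -/
theorem CSI_topology_isTree {V X : Type*} [Fintype V] [Fintype X] [DecidableEq X]
    (G : SimpleGraph V) (hG : G.Connected) (f : V → Finset X)
    (hf : IsCSI G f) (htop : IsTopologyOn X (Set.range f)) :
    G.IsTree :=
  hG.isTree_of_card_edgeSet_lt (hf.card_edgeSet_lt htop.2.2.2 htop.2.1)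
end

section
/- Let G be a finite connected simple graph admitting a disjunctive set-indexer f with respect to a nonempty finite set X such that f(V(G)) equals the full power set of X. Then G has an even number of vertices and an odd number of edges; in fact |V(G)| = 2^{|X|} and |E(G)| = 2^{|X|} − 1. -/
open Finset

lemma unionLabel_nonempty {V X : Type*} [DecidableEq X] {f : V → Finset X}
    (hf : Function.Injective f) {e : Sym2 V} (he : ¬ e.IsDiag) : (unionLabel f e).Nonempty := by
  induction e using Sym2.ind with
  | h u v =>
    refine nonempty_iff_ne_empty.2 fun h => he ?_
    obtain ⟨hu, hv⟩ := union_eq_empty.1 h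
    exact Sym2.mk_isDiag_iff.2 (hf (hu.trans hv.symm))

lemma IsDSI.card_edgeFinset_le {V X : Type*} [Fintype X] [DecidableEq X] {G : SimpleGraph V}
    [Fintype G.edgeSet] {f : V → Finset X} (hf : IsDSI G f) :
    #G.edgeFinset ≤ 2 ^ Fintype.card X - 1 :=
  calc #G.edgeFinset ≤ #(univ.erase ∅ : Finset (Finset X)) :=
        card_le_card_of_injOn (unionLabel f)
          (fun e he => mem_erase.2 ⟨(unionLabel_nonempty hf.1
            (G.not_isDiag_of_mem_edgeSet (G.mem_edgeFinset.1 he))).ne_empty, mem_univ _⟩)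
          (hf.2.mono fun e he => G.mem_edgeFinset.1 he)
    _ = 2 ^ Fintype.card X - 1 := by
      rw [card_erase_of_mem (mem_univ _), card_univ, Fintype.card_finset]

lemma IsDSI.card_eq_of_range_eq_univ {V X : Type*} [Fintype V] [Fintype X] [DecidableEq X]
    {G : SimpleGraph V} {f : V → Finset X} (hf : IsDSI G f) (hfull : Set.range f = Set.univ) :
    Fintype.card V = 2 ^ Fintype.card X := by
  rw [← Fintype.card_finset]
  exact Fintype.card_of_bijective ⟨hf.1, Set.range_eq_univ.1 hfull⟩

lemma SimpleGraph.Connected.card_sub_one_le_card_edgeFinset {V : Type*} [Fintype V]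
    {G : SimpleGraph V} [Fintype G.edgeSet] (hG : G.Connected) :
    Fintype.card V - 1 ≤ #G.edgeFinset := by
  have := hG.card_vert_le_card_edgeSet_add_one
  rw [Nat.card_eq_fintype_card, Nat.card_eq_fintype_card, ← G.edgeFinset_card] at this
  omega

/-- A connected graph with a disjunctive set-indexer whose vertex labels are
the full power set of a nonempty ground set has an even number of vertices and
an odd number of edges; indeed `|V| = 2 ^ |X|` and `|E| = 2 ^ |X| - 1`. -/
theorem graceful_DSI_card {V X : Type*} [Fintype V] [Fintype X] [Nonempty X] [DecidableEq X]
    (G : SimpleGraph V) [Fintype G.edgeSet] (hG : G.Connected) (f : V → Finset X)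
    (hf : IsDSI G f) (hfull : Set.range f = Set.univ) :
    Even (Fintype.card V) ∧ Odd G.edgeFinset.card ∧
      Fintype.card V = 2 ^ Fintype.card X ∧ G.edgeFinset.card = 2 ^ Fintype.card X - 1 := by
  have hV := hf.card_eq_of_range_eq_univ hfull
  have hE : #G.edgeFinset = 2 ^ Fintype.card X - 1 :=
    le_antisymm hf.card_edgeFinset_le (hV ▸ hG.card_sub_one_le_card_edgeFinset)
  have hpow : Even (2 ^ Fintype.card X) := (Nat.even_pow' Fintype.card_ne_zero).2 even_two
  exact ⟨hV ▸ hpow, hE ▸ Nat.Even.sub_odd Nat.one_le_two_pow hpow odd_one, hV, hE⟩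
end

section
/- Let G be a finite connected simple graph admitting a graceful conjunctive set-indexer f with respect to X such that the family f(V(G)) of vertex labels is a topology on X. Then f(V(G)) is the discrete topology on X, i.e., f(V(G)) equals the full power set of X. -/
@[simp]
theorem interLabel_mk {V X : Type*} [DecidableEq X] (f : V → Finset X) (u v : V) :
    interLabel f s(u, v) = f u ∩ f v :=
  rfl

theorem interLabel_mem_of_inter_mem {V X : Type*} [DecidableEq X] {f : V → Finset X}
    {T : Set (Finset X)} (hfT : ∀ v, f v ∈ T) (hT : ∀ A ∈ T, ∀ B ∈ T, A ∩ B ∈ T) (e : Sym2 V) :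
    interLabel f e ∈ T := by
  induction e using Sym2.ind with
  | _ u v => simpa only [interLabel_mk] using hT _ (hfT u) _ (hfT v)

theorem graceful_CSI_topology_is_discrete_general {V X : Type*} [Fintype X] [DecidableEq X]
    (G : SimpleGraph V) (f : V → Finset X)
    (hgrace : interLabel f '' G.edgeSet = {A : Finset X | A ≠ (Finset.univ : Finset X)})
    (htop : IsTopologyOn X (Set.range f)) :
    Set.range f = Set.univ := by
  refine Set.eq_univ_of_forall fun A => ?_
  by_cases hA : A = Finset.univ
  · exact hA ▸ htop.2.1
  · obtain ⟨e, -, rfl⟩ : A ∈ interLabel f '' G.edgeSet := hgrace ▸ hA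
    exact interLabel_mem_of_inter_mem Set.mem_range_self htop.2.2.2 e

/-- If a connected graph admits a graceful conjunctive set-indexer whose vertex
labels form a topology on the ground set, then the vertex labels form the
discrete topology (the full power set). -/
theorem graceful_CSI_topology_is_discrete {V X : Type*} [Fintype V] [Fintype X] [DecidableEq X]
    (G : SimpleGraph V) (hG : G.Connected) (f : V → Finset X) (hf : IsCSI G f)
    (hgrace : interLabel f '' G.edgeSet = {A : Finset X | A ≠ (Finset.univ : Finset X)})
    (htop : IsTopologyOn X (Set.range f)) :
    Set.range f = Set.univ :=
  graceful_CSI_topology_is_discrete_general G f hgrace htop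
end
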